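/- arXiv:2310.20130 — 2 statements merged into one kernel-verified Lean document; each statement's English description precedes it below -/
import Mathlib

section
/- The blocking probability of the M/M/Q/V queue, P_V(ρ) = [ρ^V/(Q^{V−Q} Q!)] · (Σ_{v=0}^{Q−1} ρ^v/v! + Σ_{v=Q}^{V} ρ^v/(Q^{v−Q} Q!))^{−1}, is strictly increasing in ρ on (0, ∞). -/
lemma mmqv_key_le {x y : ℝ} (hx : 0 < x) (hxy : x < y) {v V : ℕ} (hv : v ≤ V) :
    x ^ V * y ^ v ≤ y ^ V * x ^ v := by
  have hy : 0 < y := hx.trans hxy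
  have h1 : x ^ V * y ^ v = (x ^ v * y ^ v) * x ^ (V - v) := by
    rw [← pow_mul_pow_sub x hv]; ring
  have h2 : y ^ V * x ^ v = (x ^ v * y ^ v) * y ^ (V - v) := by
    rw [← pow_mul_pow_sub y hv]; ring
  rw [h1, h2]
  exact mul_le_mul_of_nonneg_left (pow_le_pow_left₀ hx.le hxy.le _) (by positivity)

lemma mmqv_key_lt {x y : ℝ} (hx : 0 < x) (hxy : x < y) {v V : ℕ} (hv : v < V) :
    x ^ V * y ^ v < y ^ V * x ^ v := by
  have hy : 0 < y := hx.trans hxy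
  have h1 : x ^ V * y ^ v = (x ^ v * y ^ v) * x ^ (V - v) := by
    rw [← pow_mul_pow_sub x hv.le]; ring
  have h2 : y ^ V * x ^ v = (x ^ v * y ^ v) * y ^ (V - v) := by
    rw [← pow_mul_pow_sub y hv.le]; ring
  rw [h1, h2]
  exact mul_lt_mul_of_pos_left
    (pow_lt_pow_left₀ hxy hx.le (Nat.sub_ne_zero_of_lt hv)) (by positivity)

/-- The blocking probability of the M/M/Q/V queue is strictly increasing in ρ on (0, ∞). -/
theorem mmqv_blocking_strictMono (Q V : ℕ) (hQ : 1 ≤ Q) (hQV : Q ≤ V) :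
    StrictMonoOn (fun ρ : ℝ =>
      (ρ ^ V / ((Q : ℝ) ^ (V - Q) * (Nat.factorial Q : ℝ))) *
      (∑ v ∈ Finset.range Q, ρ ^ v / (Nat.factorial v : ℝ) +
        ∑ v ∈ Finset.Icc Q V, ρ ^ v / ((Q : ℝ) ^ (v - Q) * (Nat.factorial Q : ℝ)))⁻¹)
      (Set.Ioi 0) := by
  intro x hx y hy hxy
  simp only [Set.mem_Ioi] at hx hy
  have hy' : 0 < y := hy
  set a : ℝ := (Q : ℝ) ^ (V - Q) * (Nat.factorial Q : ℝ) with ha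
  have hQ0 : (0:ℝ) < (Q:ℝ) := by exact_mod_cast hQ
  have haPos : 0 < a := by
    have := Nat.factorial_pos Q
    positivity
  set D : ℝ → ℝ := fun ρ => (∑ v ∈ Finset.range Q, ρ ^ v / (Nat.factorial v : ℝ) +
        ∑ v ∈ Finset.Icc Q V, ρ ^ v / ((Q : ℝ) ^ (v - Q) * (Nat.factorial Q : ℝ))) with hD
  have hDpos : ∀ ρ : ℝ, 0 < ρ → 0 < D ρ := by
    intro ρ hρ
    have h1 : 0 < ∑ v ∈ Finset.range Q, ρ ^ v / (Nat.factorial v : ℝ) :=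
      Finset.sum_pos (fun v _ => by
        have := Nat.factorial_pos v; positivity) ⟨0, Finset.mem_range.mpr hQ⟩
    have h2 : 0 ≤ ∑ v ∈ Finset.Icc Q V, ρ ^ v / ((Q : ℝ) ^ (v - Q) * (Nat.factorial Q : ℝ)) :=
      Finset.sum_nonneg (fun v _ => by
        have := Nat.factorial_pos Q; positivity)
    simp only [hD]
    linarith
  have hform : ∀ ρ : ℝ, ρ ^ V / a * (D ρ)⁻¹ = ρ ^ V / (a * D ρ) := by
    intro ρ
    simp only [div_eq_mul_inv, mul_inv]; ring
  show x ^ V / a * (D x)⁻¹ < y ^ V / a * (D y)⁻¹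
  rw [hform, hform, div_lt_div_iff₀ (by have := hDpos x hx; positivity)
    (by have := hDpos y hy'; positivity)]
  have main : x ^ V * D y < y ^ V * D x := by
    simp only [hD, mul_add]
    have hstrict : x ^ V * ∑ v ∈ Finset.range Q, y ^ v / (Nat.factorial v : ℝ)
        < y ^ V * ∑ v ∈ Finset.range Q, x ^ v / (Nat.factorial v : ℝ) := by
      rw [Finset.mul_sum, Finset.mul_sum]
      refine Finset.sum_lt_sum_of_nonempty ⟨0, Finset.mem_range.mpr hQ⟩ ?_
      intro v hv
      have hvV : v < V := lt_of_lt_of_le (Finset.mem_range.mp hv) hQV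
      have hc : (0:ℝ) < (Nat.factorial v : ℝ) := by exact_mod_cast Nat.factorial_pos v
      rw [mul_div_assoc', mul_div_assoc']
      exact div_lt_div_of_pos_right (mmqv_key_lt hx hxy hvV) hc
    have hle : x ^ V * ∑ v ∈ Finset.Icc Q V, y ^ v / ((Q : ℝ) ^ (v - Q) * (Nat.factorial Q : ℝ))
        ≤ y ^ V * ∑ v ∈ Finset.Icc Q V, x ^ v / ((Q : ℝ) ^ (v - Q) * (Nat.factorial Q : ℝ)) := by
      rw [Finset.mul_sum, Finset.mul_sum]
      refine Finset.sum_le_sum ?_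
      intro v hv
      have hvV : v ≤ V := (Finset.mem_Icc.mp hv).2
      have hc : (0:ℝ) < (Q : ℝ) ^ (v - Q) * (Nat.factorial Q : ℝ) := by
        have := Nat.factorial_pos Q; positivity
      rw [mul_div_assoc', mul_div_assoc']
      exact div_le_div_of_nonneg_right (mmqv_key_le hx hxy hvV) hc.le
    linarith
  calc x ^ V * (a * D y) = a * (x ^ V * D y) := by ring
    _ < a * (y ^ V * D x) := mul_lt_mul_of_pos_left main haPos
    _ = y ^ V * (a * D x) := by ring
end

section
/- Under the fleet-conservation and Little's-law relations of the operating shift, if the number of operating vehicles satisfies N₁ ≥ (2^{1/3} + (1/4)^{1/3})(Aλ)^{2/3} + λτ with A, λ, τ > 0, then there exist strictly positive reals w^c and w^v such that w^c = A/√(λ w^v) and λ(w^v + w^c + τ) = N₁. -/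
/-- If the number of operating vehicles exceeds the threshold
`(2^{1/3} + (1/4)^{1/3})(Aλ)^{2/3} + λτ`, then strictly positive passenger waiting time
and vehicle idle time exist satisfying the square-root law and conservation equation. -/
theorem operating_shift_equilibrium_exists (A lam τ N1 : ℝ)
    (hA : 0 < A) (hlam : 0 < lam) (hτ : 0 < τ)
    (hN1 : ((2:ℝ) ^ ((1:ℝ)/3) + ((1:ℝ)/4) ^ ((1:ℝ)/3)) * (A * lam) ^ ((2:ℝ)/3) + lam * τ ≤ N1) :
    ∃ wc wv : ℝ, 0 < wc ∧ 0 < wv ∧ wc = A / Real.sqrt (lam * wv) ∧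
      lam * (wv + wc + τ) = N1 := by
  set P := lam * A with hPdef
  have hP0 : (0:ℝ) < P := mul_pos hlam hA
  have h2 : (0:ℝ) < 2 := by norm_num
  set t0 := (P/2) ^ ((1:ℝ)/3) with ht0def
  have ht0 : 0 < t0 := Real.rpow_pos_of_pos (by positivity) _
  set C := N1 - lam * τ with hCdef
  -- basic rpow identities
  have eP : P ^ ((2:ℝ)/3) = P / P ^ ((1:ℝ)/3) := by
    rw [show (2:ℝ)/3 = 1 - 1/3 by norm_num, Real.rpow_sub hP0, Real.rpow_one]
  have e4 : ((1:ℝ)/4) ^ ((1:ℝ)/3) = 1 / (2:ℝ) ^ ((2:ℝ)/3) := by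
    rw [show ((1:ℝ)/4) = (1/2:ℝ)^(2:ℕ) by norm_num, ← Real.rpow_natCast ((1:ℝ)/2) 2,
      ← Real.rpow_mul (by norm_num)]
    rw [show ((2:ℕ):ℝ) * ((1:ℝ)/3) = (2:ℝ)/3 by norm_num]
    rw [Real.div_rpow (by norm_num) h2.le, Real.one_rpow]
  have e1 : t0 ^ 2 = P ^ ((2:ℝ)/3) / 2 ^ ((2:ℝ)/3) := by
    rw [ht0def, ← Real.rpow_natCast _ 2, ← Real.rpow_mul (by positivity)]
    rw [show ((1:ℝ)/3) * ((2:ℕ):ℝ) = (2:ℝ)/3 by norm_num]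
    rw [Real.div_rpow hP0.le h2.le]
  have e2 : P / t0 = 2 ^ ((1:ℝ)/3) * P ^ ((2:ℝ)/3) := by
    rw [ht0def, Real.div_rpow hP0.le h2.le, div_div_eq_mul_div, eP]
    have h1 : (0:ℝ) < P ^ ((1:ℝ)/3) := Real.rpow_pos_of_pos hP0 _
    field_simp
  have hAl : (A * lam) ^ ((2:ℝ)/3) = P ^ ((2:ℝ)/3) := by rw [hPdef, mul_comm]
  have hkey : t0 ^ 2 + P / t0
      = ((2:ℝ) ^ ((1:ℝ)/3) + ((1:ℝ)/4) ^ ((1:ℝ)/3)) * (A * lam) ^ ((2:ℝ)/3) := by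
    rw [e1, e2, e4, hAl]
    have h22 : (0:ℝ) < (2:ℝ) ^ ((2:ℝ)/3) := Real.rpow_pos_of_pos h2 _
    field_simp
    ring
  have hC1 : t0 ^ 2 + P / t0 ≤ C := by rw [hkey, hCdef]; linarith
  have hCpos : 0 < C := lt_of_lt_of_le (by positivity) hC1
  set T := t0 + Real.sqrt C with hTdef
  have hT : t0 ≤ T := le_add_of_nonneg_right (Real.sqrt_nonneg _)
  have hT0 : 0 < T := lt_of_lt_of_le ht0 hT
  have hC2 : C ≤ T ^ 2 + P / T := by
    have hs : Real.sqrt C ≤ T := le_add_of_nonneg_left ht0.le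
    have h1 : C ≤ T ^ 2 := by
      have := Real.sq_sqrt hCpos.le
      nlinarith [Real.sqrt_nonneg C]
    have h2' : 0 < P / T := div_pos hP0 hT0
    nlinarith [h1, h2']
  have hcont : ContinuousOn (fun t : ℝ => t ^ 2 + P / t) (Set.Icc t0 T) := by
    apply ContinuousOn.add
    · exact (continuous_pow 2).continuousOn
    · exact ContinuousOn.div continuousOn_const continuousOn_id
        (fun x hx => ne_of_gt (lt_of_lt_of_le ht0 hx.1))
  obtain ⟨t, htmem, hteq⟩ := intermediate_value_Icc hT hcont ⟨hC1, hC2⟩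
  have ht' : 0 < t := lt_of_lt_of_le ht0 htmem.1
  refine ⟨A / t, t ^ 2 / lam, by positivity, by positivity, ?_, ?_⟩
  · rw [show lam * (t ^ 2 / lam) = t ^ 2 by field_simp, Real.sqrt_sq ht'.le]
  · have h : t ^ 2 + P / t = C := hteq
    rw [hCdef] at h
    have hexp : lam * (t ^ 2 / lam + A / t + τ) = t ^ 2 + P / t + lam * τ := by
      rw [hPdef]
      field_simp
    linarith [h, hexp]
end
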